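/- Let O = O1 ∪ {o_k}, where O1 is a finite set with at least two elements, o_k ∉ O1, the fuzzy similarity relation r satisfies r(x,y) > 0 for all x, y ∈ O1 and r(x, o_k) = r(o_k, x) = 0 for all x ∈ O1. Then for every o_i ∈ O1 the ratios of fuzzy entropies satisfy FE(O \ {o_k}) / FE(O) < FE(O \ {o_i}) / FE(O), where FE(O) > 0 under the stated hypotheses; i.e. denoting FE_{¬x}(O) = FE(O \ {x}), the normalized entropy after removing the isolated point o_k is strictly smaller than after removing any cluster point o_i. -/
import Mathlib


open Finset

variable {α : Type*} [DecidableEq α]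

/-- Fuzzy cardinality of `x` within `S`: `|[x]|_S = ∑_{y ∈ S} r x y`. -/
noncomputable def fuzzyCard (r : α → α → ℝ) (S : Finset α) (x : α) : ℝ :=
  ∑ y ∈ S, r x y

/-- Fuzzy entropy of `S`: `FE(S) = -(1/|S|) ∑_{x ∈ S} log₂(|[x]|_S / |S|)`. -/
noncomputable def fuzzyEntropy (r : α → α → ℝ) (S : Finset α) : ℝ :=
  -(1 / (S.card : ℝ)) * ∑ x ∈ S, Real.logb 2 (fuzzyCard r S x / (S.card : ℝ))

set_option linter.unusedSectionVars false

private lemma fuzzyCard_insert_zero {r : α → α → ℝ} {S : Finset α} {ok : α}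
    (h : ok ∉ S) (hz : ∀ x ∈ S, r x ok = 0) {x : α} (hx : x ∈ S) :
    fuzzyCard r (insert ok S) x = fuzzyCard r S x := by
  unfold fuzzyCard
  rw [Finset.sum_insert h, hz x hx, zero_add]

private lemma fuzzyCard_insert_ok {r : α → α → ℝ} {S : Finset α} {ok : α}
    (h : ok ∉ S) (hrefl : r ok ok = 1) (hz : ∀ x ∈ S, r ok x = 0) :
    fuzzyCard r (insert ok S) ok = 1 := by
  unfold fuzzyCard
  rw [Finset.sum_insert h, hrefl, Finset.sum_eq_zero hz, add_zero]

private lemma one_le_fuzzyCard {r : α → α → ℝ} {S : Finset α} {x : α}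
    (hx : x ∈ S) (hrefl : r x x = 1) (hnn : ∀ y ∈ S, 0 ≤ r x y) :
    1 ≤ fuzzyCard r S x := by
  have := Finset.single_le_sum hnn hx
  rw [hrefl] at this
  exact this

private lemma fuzzyCard_le_card {r : α → α → ℝ} {S : Finset α} {x : α}
    (h1 : ∀ y ∈ S, r x y ≤ 1) : fuzzyCard r S x ≤ S.card := by
  calc fuzzyCard r S x ≤ ∑ _y ∈ S, (1:ℝ) := Finset.sum_le_sum h1
  _ = S.card := by simp


/-- With `O = O1 ∪ {ok}`, the fuzzy entropy of `O` is positive, and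
the normalized entropy after removing the isolated point `ok` is strictly smaller
than after removing any cluster point `oi ∈ O1`:
`FE(O \ {ok}) / FE(O) < FE(O \ {oi}) / FE(O)`. -/
theorem normalized_entropy_isolated_lt (r : α → α → ℝ) (O1 : Finset α) (ok : α)
    (hcard : 2 ≤ O1.card) (hok : ok ∉ O1)
    (hsymm : ∀ x y, r x y = r y x)
    (hrefl : ∀ x, r x x = 1)
    (hrange : ∀ x y, r x y ∈ Set.Icc (0 : ℝ) 1)
    (hpos : ∀ x ∈ O1, ∀ y ∈ O1, 0 < r x y)
    (hzero : ∀ x ∈ O1, r x ok = 0 ∧ r ok x = 0) :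
    0 < fuzzyEntropy r (insert ok O1) ∧
    ∀ oi ∈ O1,
      fuzzyEntropy r ((insert ok O1).erase ok) / fuzzyEntropy r (insert ok O1)
        < fuzzyEntropy r ((insert ok O1).erase oi) / fuzzyEntropy r (insert ok O1) := by
  have hz1 : ∀ x ∈ O1, r x ok = 0 := fun x hx => (hzero x hx).1
  have hz2 : ∀ x ∈ O1, r ok x = 0 := fun x hx => (hzero x hx).2
  have hrnn : ∀ x y, 0 ≤ r x y := fun x y => (hrange x y).1
  have hr1 : ∀ x y, r x y ≤ 1 := fun x y => (hrange x y).2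
  have hn0 : (0:ℝ) < (O1.card : ℝ) := by
    have : 0 < O1.card := by omega
    exact_mod_cast this
  have hcardO : ((insert ok O1).card : ℝ) = (O1.card : ℝ) + 1 := by
    rw [Finset.card_insert_of_notMem hok]; push_cast; ring
  -- Positivity of FE(O)
  have hEOpos : 0 < fuzzyEntropy r (insert ok O1) := by
    unfold fuzzyEntropy
    rw [hcardO]
    have hsum : ∑ x ∈ insert ok O1,
        Real.logb 2 (fuzzyCard r (insert ok O1) x / ((O1.card : ℝ) + 1)) < 0 := by
      apply Finset.sum_neg _ (Finset.insert_nonempty _ _)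
      intro x hx
      rcases Finset.mem_insert.mp hx with rfl | hx1
      · rw [fuzzyCard_insert_ok hok (hrefl x) hz2]
        apply Real.logb_neg (by norm_num)
        · positivity
        · rw [div_lt_one (by positivity)]; linarith
      · rw [fuzzyCard_insert_zero hok hz1 hx1]
        have h1 : 1 ≤ fuzzyCard r O1 x :=
          one_le_fuzzyCard hx1 (hrefl x) (fun y _ => hrnn x y)
        have h2 : fuzzyCard r O1 x ≤ (O1.card : ℝ) :=
          fuzzyCard_le_card (fun y _ => hr1 x y)
        apply Real.logb_neg (by norm_num)
        · positivity
        · rw [div_lt_one (by positivity)]; linarith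
    have hneg : -(1 / ((O1.card : ℝ) + 1)) < 0 := by
      rw [neg_lt, neg_zero]; positivity
    exact mul_pos_of_neg_of_neg hneg hsum
  refine ⟨hEOpos, fun oi hoi => ?_⟩
  have hokne : ok ≠ oi := fun h => hok (h ▸ hoi)
  rw [Finset.erase_insert hok, Finset.erase_insert_of_ne hokne]
  set S := O1.erase oi with hS
  have hokS : ok ∉ S := fun h => hok (Finset.mem_of_mem_erase h)
  have hSsub : S ⊆ O1 := Finset.erase_subset _ _
  have hoiS : oi ∉ S := Finset.notMem_erase _ _
  have hinsS : insert oi S = O1 := Finset.insert_erase hoi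
  have hScard : S.card + 1 = O1.card := by
    rw [hS, Finset.card_erase_of_mem hoi]; omega
  have hSne : S.Nonempty := by
    rw [← Finset.card_pos]; omega
  have hcardIS : ((insert ok S).card : ℝ) = (O1.card : ℝ) := by
    rw [Finset.card_insert_of_notMem hokS]
    exact_mod_cast congrArg (Nat.cast (R := ℝ)) hScard
  have key : fuzzyEntropy r O1 < fuzzyEntropy r (insert ok S) := by
    unfold fuzzyEntropy
    rw [hcardIS, Finset.sum_insert hokS,
      fuzzyCard_insert_ok hokS (hrefl ok) (fun x hx => hz2 x (hSsub hx)),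
      ← Finset.add_sum_erase O1 _ hoi, ← hS]
    have hterm : ∀ x ∈ S,
        Real.logb 2 (fuzzyCard r (insert ok S) x / (O1.card : ℝ))
          < Real.logb 2 (fuzzyCard r O1 x / (O1.card : ℝ)) := by
      intro x hx
      rw [fuzzyCard_insert_zero hokS (fun y hy => hz1 y (hSsub hy)) hx]
      have hlt : fuzzyCard r S x < fuzzyCard r O1 x := by
        unfold fuzzyCard
        rw [← hinsS, Finset.sum_insert hoiS]
        have := hpos x (hSsub hx) oi hoi
        linarith
      have h1 : 1 ≤ fuzzyCard r S x :=
        one_le_fuzzyCard hx (hrefl x) (fun y _ => hrnn x y)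
      apply Real.logb_lt_logb (by norm_num) (by positivity)
      exact div_lt_div_of_pos_right hlt hn0
    have hsumlt : ∑ x ∈ S, Real.logb 2 (fuzzyCard r (insert ok S) x / (O1.card : ℝ))
        < ∑ x ∈ S, Real.logb 2 (fuzzyCard r O1 x / (O1.card : ℝ)) :=
      Finset.sum_lt_sum_of_nonempty hSne hterm
    have hoile : Real.logb 2 (1 / (O1.card : ℝ))
        ≤ Real.logb 2 (fuzzyCard r O1 oi / (O1.card : ℝ)) := by
      have h1 : 1 ≤ fuzzyCard r O1 oi :=
        one_le_fuzzyCard hoi (hrefl oi) (fun y _ => hrnn oi y)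
      apply Real.logb_le_logb_of_le (by norm_num) (by positivity)
      gcongr
    have hBA : Real.logb 2 (1 / (O1.card : ℝ))
          + ∑ x ∈ S, Real.logb 2 (fuzzyCard r (insert ok S) x / (O1.card : ℝ))
        < Real.logb 2 (fuzzyCard r O1 oi / (O1.card : ℝ))
          + ∑ x ∈ S, Real.logb 2 (fuzzyCard r O1 x / (O1.card : ℝ)) :=
      add_lt_add_of_le_of_lt hoile hsumlt
    have h1n : (0:ℝ) < 1 / (O1.card : ℝ) := by positivity
    nlinarith [mul_pos h1n (sub_pos.mpr hBA)]
  exact div_lt_div_of_pos_right key hEOpos
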